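/- For a signed partition η of ℕ whose positive and negative blocks are all infinite, the normalizer in S_ℕ of the signed Young subgroup Y_η equals the 'unsigned' Young subgroup ∏_i S⁺(B_i) (the group of finitely supported permutations preserving each block of η setwise); consequently N(N(Y_η)) = N(Y_η), i.e., the normalizer of Y_η is self-normalizing. -/

import Mathlib

/-- The support of a product is contained in the union of supports. -/
theorem supp_mul_subset (a b : Equiv.Perm ℕ) :
    {x | (a * b) x ≠ x} ⊆ {x | a x ≠ x} ∪ {x | b x ≠ x} := by
  intro x hx
  by_contra h
  simp only [Set.mem_union, Set.mem_setOf_eq, not_or, not_not] at h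
  exact hx (by simp [Equiv.Perm.mul_apply, h.2, h.1])

theorem supp_inv_eq (a : Equiv.Perm ℕ) : {x | a⁻¹ x ≠ x} = {x | a x ≠ x} := by
  ext x
  simp only [Set.mem_setOf_eq, ne_eq, Equiv.Perm.inv_eq_iff_eq]
  exact not_congr eq_comm

/-- `S⁺(B)`: the group of finitely supported permutations of `ℕ` whose support
is contained in `B`. -/
def Splus (B : Set ℕ) : Subgroup (Equiv.Perm ℕ) where
  carrier := {g | {x | g x ≠ x}.Finite ∧ ∀ x, g x ≠ x → x ∈ B}
  one_mem' := by simp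
  mul_mem' := by
    rintro a b ⟨ha1, ha2⟩ ⟨hb1, hb2⟩
    refine ⟨(ha1.union hb1).subset (supp_mul_subset a b), fun x hx => ?_⟩
    rcases supp_mul_subset a b hx with h | h
    · exact ha2 x h
    · exact hb2 x h
  inv_mem' := by
    rintro a ⟨ha1, ha2⟩
    constructor
    · rw [supp_inv_eq]
      exact ha1
    · intro x hx
      have hx' : x ∈ {x | a x ≠ x} :=
        supp_inv_eq a ▸ (hx : x ∈ {x | a⁻¹ x ≠ x})
      exact ha2 x hx'

/-- `S_ℕ`: the group of all finitely supported permutations of `ℕ`. -/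
def SN : Subgroup (Equiv.Perm ℕ) := Splus Set.univ

/-- `S⁻(B)`: the finitary alternating group on `B`, generated by the products of
two transpositions of elements of `B`. -/
def Sminus (B : Set ℕ) : Subgroup (Equiv.Perm ℕ) :=
  Subgroup.closure {g | ∃ a b c d : ℕ, a ∈ B ∧ b ∈ B ∧ c ∈ B ∧ d ∈ B ∧
    a ≠ b ∧ c ≠ d ∧ g = Equiv.swap a b * Equiv.swap c d}

/-- The signed Young subgroup `Y_η` associated to families `pos`, `neg` of blocks. -/
def Yyoung (pos neg : Set (Set ℕ)) : Subgroup (Equiv.Perm ℕ) :=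
  (⨆ B ∈ pos, Splus B) ⊔ (⨆ B ∈ neg, Sminus B)


/-! Conjugation by `g` carries `S⁺(B)` and `S⁻(B)` into `S⁺(g B)` and `S⁻(g B)`, so every
permutation fixing each block setwise normalizes `Y_η`. Conversely, let a finitely supported
`g` normalize a group `K` with `S⁻(B) ≤ K ≤ Stab(B)` for an infinite block `B`. If `g a ∉ B`
for some `a ∈ B`, pick `c ∈ B` fixed by `g` and any other `b ∈ B`: the conjugate by `g` of
the 3-cycle `(a b c)`, which lies in `K`, sends `c` to `g a` and so does not stabilize `B`.
Both `Y_η` and `N(Y_η) ∩ S_ℕ` are groups `K` of this kind. -/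

open Equiv Set Pointwise MulAction

theorem mem_Splus_iff {B : Set ℕ} {g : Perm ℕ} :
    g ∈ Splus B ↔ {x | g x ≠ x}.Finite ∧ {x | g x ≠ x} ⊆ B :=
  Iff.rfl

theorem Splus_mono {B C : Set ℕ} (h : B ⊆ C) : Splus B ≤ Splus C :=
  fun _ hg => ⟨hg.1, fun x hx => h (hg.2 x hx)⟩

theorem swap_mem_Splus {B : Set ℕ} {a b : ℕ} (ha : a ∈ B) (hb : b ∈ B) :
    swap a b ∈ Splus B := by
  have hsupp : {x | swap a b x ≠ x} ⊆ {a, b} := fun x hx => by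
    by_contra hab
    simp only [mem_insert_iff, mem_singleton_iff, not_or] at hab
    exact hx (swap_apply_of_ne_of_ne hab.1 hab.2)
  exact ⟨(toFinite {a, b}).subset hsupp,
    hsupp.trans (insert_subset ha (singleton_subset_iff.2 hb))⟩

theorem Sminus_le_Splus (B : Set ℕ) : Sminus B ≤ Splus B := by
  rw [Sminus, Subgroup.closure_le]
  rintro _ ⟨a, b, c, d, ha, hb, hc, hd, -, -, rfl⟩
  exact mul_mem (swap_mem_Splus ha hb) (swap_mem_Splus hc hd)

theorem swap_mul_swap_mem_Sminus {B : Set ℕ} {a b c : ℕ} (ha : a ∈ B) (hb : b ∈ B)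
    (hc : c ∈ B) (hab : a ≠ b) (hbc : b ≠ c) : swap a b * swap b c ∈ Sminus B :=
  Subgroup.subset_closure ⟨a, b, b, c, ha, hb, hb, hc, hab, hbc, rfl⟩

theorem support_conj (g h : Perm ℕ) :
    {x | (g * h * g⁻¹) x ≠ x} = g '' {x | h x ≠ x} := by
  ext x
  rw [mem_image_equiv]
  simp [Perm.mul_apply, Perm.inv_def, ← eq_symm_apply]

theorem conj_mem_Splus {B : Set ℕ} {h : Perm ℕ} (g : Perm ℕ) (hh : h ∈ Splus B) :
    g * h * g⁻¹ ∈ Splus (g '' B) := by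
  rw [mem_Splus_iff, support_conj]
  exact ⟨hh.1.image g, image_mono hh.2⟩

theorem conj_mem_Sminus {B : Set ℕ} {h : Perm ℕ} (g : Perm ℕ) (hh : h ∈ Sminus B) :
    g * h * g⁻¹ ∈ Sminus (g '' B) := by
  suffices Sminus B ≤ (Sminus (g '' B)).comap (MulAut.conj g).toMonoidHom from this hh
  rw [Sminus, Subgroup.closure_le]
  rintro _ ⟨a, b, c, d, ha, hb, hc, hd, hab, hcd, rfl⟩
  refine Subgroup.subset_closure ⟨g a, g b, g c, g d, mem_image_of_mem g ha,
    mem_image_of_mem g hb, mem_image_of_mem g hc, mem_image_of_mem g hd,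
    g.injective.ne hab, g.injective.ne hcd, ?_⟩
  simp only [MulEquiv.toMonoidHom_eq_coe, MonoidHom.coe_coe, map_mul, MulAut.conj_apply,
    swap_apply_apply]

theorem Splus_le_Yyoung {pos : Set (Set ℕ)} (neg : Set (Set ℕ)) {B : Set ℕ} (hB : B ∈ pos) :
    Splus B ≤ Yyoung pos neg :=
  le_sup_of_le_left (le_biSup (fun B => Splus B) hB)

theorem Sminus_le_Yyoung {pos neg : Set (Set ℕ)} {B : Set ℕ} (hB : B ∈ pos ∪ neg) :
    Sminus B ≤ Yyoung pos neg := by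
  rcases hB with hB | hB
  · exact (Sminus_le_Splus B).trans (Splus_le_Yyoung neg hB)
  · exact le_sup_of_le_right (le_biSup (fun B => Sminus B) hB)

def blockStabilizer (blocks : Set (Set ℕ)) : Subgroup (Perm ℕ) :=
  ⨅ B ∈ blocks, stabilizer (Perm ℕ) B

theorem mem_blockStabilizer {blocks : Set (Set ℕ)} {g : Perm ℕ} :
    g ∈ blockStabilizer blocks ↔ ∀ B ∈ blocks, g '' B = B := by
  simp only [blockStabilizer, Subgroup.mem_iInf, mem_stabilizer_iff]
  rfl

theorem Splus_le_blockStabilizer {blocks : Set (Set ℕ)} (hdisj : blocks.Pairwise Disjoint)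
    {B : Set ℕ} (hB : B ∈ blocks) : Splus B ≤ blockStabilizer blocks := by
  intro y hy
  have hfix : EqOn y id Bᶜ := fun x hx => by_contra fun hyx => hx (hy.2 x hyx)
  rw [mem_blockStabilizer]
  intro C hC
  by_cases hBC : Disjoint B C
  · rw [hfix.mono hBC.subset_compl_left |>.image_eq, image_id]
  · rw [hdisj.eq hB hC hBC] at hfix
    rw [← compl_compl (y '' C), ← image_compl_eq y.bijective, hfix.image_eq, image_id,
      compl_compl]

theorem Yyoung_le_blockStabilizer {pos neg : Set (Set ℕ)}
    (hdisj : (pos ∪ neg).Pairwise Disjoint) :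
    Yyoung pos neg ≤ blockStabilizer (pos ∪ neg) :=
  sup_le (iSup₂_le fun _ hB => Splus_le_blockStabilizer hdisj (Or.inl hB))
    (iSup₂_le fun B hB => (Sminus_le_Splus B).trans
      (Splus_le_blockStabilizer hdisj (Or.inr hB)))

theorem conj_mem_Yyoung {pos neg : Set (Set ℕ)} {g h : Perm ℕ}
    (hg : g ∈ blockStabilizer (pos ∪ neg)) (hh : h ∈ Yyoung pos neg) :
    g * h * g⁻¹ ∈ Yyoung pos neg := by
  rw [mem_blockStabilizer] at hg
  suffices Yyoung pos neg ≤ (Yyoung pos neg).comap (MulAut.conj g).toMonoidHom from this hh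
  refine sup_le (iSup₂_le fun B hB k hk => ?_) (iSup₂_le fun B hB k hk => ?_)
  · have := conj_mem_Splus g hk
    rw [hg B (Or.inl hB)] at this
    exact Splus_le_Yyoung neg hB this
  · have := conj_mem_Sminus g hk
    rw [hg B (Or.inr hB)] at this
    exact Sminus_le_Yyoung (Or.inr hB) this

theorem blockStabilizer_le_normalizer_Yyoung (pos neg : Set (Set ℕ)) :
    blockStabilizer (pos ∪ neg) ≤ Subgroup.normalizer (Yyoung pos neg : Set (Perm ℕ)) := by
  refine fun g hg => Subgroup.mem_normalizer_iff.2 fun h => ⟨conj_mem_Yyoung hg, fun hh => ?_⟩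
  simpa [mul_assoc] using conj_mem_Yyoung (inv_mem hg) hh

theorem mapsTo_of_conj_mem {K : Subgroup (Perm ℕ)} {B : Set ℕ} (hB : B.Infinite)
    (hSK : Sminus B ≤ K) (hKB : K ≤ stabilizer (Perm ℕ) B) {g : Perm ℕ} (hg : g ∈ SN)
    (hgK : ∀ k ∈ K, g * k * g⁻¹ ∈ K) : MapsTo g B B := by
  intro a ha
  by_contra hga
  obtain ⟨c, hcB, hc⟩ := hB.exists_notMem_finite (hg.1.union (finite_singleton a))
  simp only [mem_union, mem_ofPred_eq, not_or, not_not, mem_singleton_iff] at hc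
  obtain ⟨b, hbB, hb⟩ := hB.exists_notMem_finite (toFinite {a, c})
  simp only [mem_insert_iff, mem_singleton_iff, not_or] at hb
  have hσ := hKB (hgK _ (hSK (swap_mul_swap_mem_Sminus ha hbB hcB (Ne.symm hb.1) hb.2)))
  have hc_image : (g * (swap a b * swap b c) * g⁻¹) c = g a := by
    simp [Perm.mul_apply, Perm.inv_def, g.symm_apply_eq.2 hc.1.symm]
  rw [mem_stabilizer_iff] at hσ
  have := hσ ▸ smul_mem_smul_set (a := g * (swap a b * swap b c) * g⁻¹) hcB
  exact hga (hc_image ▸ this)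

theorem mem_stabilizer_of_mem_normalizer {K : Subgroup (Perm ℕ)} {B : Set ℕ} (hB : B.Infinite)
    (hSK : Sminus B ≤ K) (hKB : K ≤ stabilizer (Perm ℕ) B) {g : Perm ℕ} (hg : g ∈ SN)
    (hgK : g ∈ Subgroup.normalizer (K : Set (Perm ℕ))) : g ∈ stabilizer (Perm ℕ) B := by
  have conj_mem {g : Perm ℕ} (hgK : g ∈ Subgroup.normalizer (K : Set (Perm ℕ))) :
      ∀ k ∈ K, g * k * g⁻¹ ∈ K := fun k => (Subgroup.mem_normalizer_iff.1 hgK k).1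
  have hmaps := mapsTo_of_conj_mem hB hSK hKB hg (conj_mem hgK)
  have hmaps_inv := mapsTo_of_conj_mem hB hSK hKB (inv_mem hg) (conj_mem (inv_mem hgK))
  refine mem_stabilizer_iff.2 (hmaps.image_subset.antisymm fun x hx => ?_)
  exact ⟨g⁻¹ x, hmaps_inv hx, g.apply_symm_apply x⟩

theorem normalizer_Yyoung_inf_SN {pos neg : Set (Set ℕ)}
    (hdisj : (pos ∪ neg).Pairwise Disjoint) (hinf : ∀ B ∈ pos ∪ neg, B.Infinite) :
    Subgroup.normalizer (Yyoung pos neg : Set (Perm ℕ)) ⊓ SN =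
      blockStabilizer (pos ∪ neg) ⊓ SN := by
  refine le_antisymm (fun g hg => ⟨mem_blockStabilizer.2 fun B hB => ?_, hg.2⟩)
    (inf_le_inf_right _ (blockStabilizer_le_normalizer_Yyoung pos neg))
  have hYB : Yyoung pos neg ≤ stabilizer (Perm ℕ) B :=
    (Yyoung_le_blockStabilizer hdisj).trans (iInf₂_le B hB)
  exact mem_stabilizer_iff.1
    (mem_stabilizer_of_mem_normalizer (hinf B hB) (Sminus_le_Yyoung hB) hYB hg.2 hg.1)

theorem stmt13_general (pos neg : Set (Set ℕ))
    (hdisj : (pos ∪ neg).Pairwise Disjoint)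
    (hinf : ∀ B ∈ pos ∪ neg, B.Infinite) :
    (∀ g ∈ SN, (g ∈ Subgroup.normalizer (Yyoung pos neg : Set (Equiv.Perm ℕ)) ↔
        ∀ B ∈ pos ∪ neg, g '' B = B)) ∧
    (∀ g ∈ SN, (g ∈ Subgroup.normalizer
        ((Subgroup.normalizer (Yyoung pos neg : Set (Equiv.Perm ℕ)) ⊓ SN : Subgroup (Equiv.Perm ℕ)) :
          Set (Equiv.Perm ℕ)) ↔
        g ∈ Subgroup.normalizer (Yyoung pos neg : Set (Equiv.Perm ℕ)) ⊓ SN)) := by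
  have hN := normalizer_Yyoung_inf_SN hdisj hinf
  have mem_normalizer_iff (g : Perm ℕ) (hg : g ∈ SN) :
      g ∈ Subgroup.normalizer (Yyoung pos neg : Set (Perm ℕ)) ↔
        ∀ B ∈ pos ∪ neg, g '' B = B := by
    have := SetLike.ext_iff.1 hN g
    simpa only [Subgroup.mem_inf, hg, and_true, mem_blockStabilizer] using this
  refine ⟨mem_normalizer_iff, fun g hg => ⟨fun hgN => ?_, (Subgroup.le_normalizer ·)⟩⟩
  rw [hN] at hgN ⊢
  refine ⟨mem_blockStabilizer.2 fun B hB => ?_, hg⟩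
  have hSB : Sminus B ≤ blockStabilizer (pos ∪ neg) ⊓ SN :=
    (Sminus_le_Splus B).trans
      (le_inf (Splus_le_blockStabilizer hdisj hB) (Splus_mono (subset_univ B)))
  exact mem_stabilizer_iff.1 (mem_stabilizer_of_mem_normalizer (hinf B hB) hSB
    (inf_le_left.trans (iInf₂_le B hB)) hg hgN)

/-- For a signed partition `η` of `ℕ` all of whose positive and negative blocks are
infinite, the normalizer in `S_ℕ` of the signed Young subgroup `Y_η` is the
"unsigned" Young subgroup of all finitely supported permutations preserving each
block setwise; consequently this normalizer is self-normalizing in `S_ℕ`: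
`N(N(Y_η)) = N(Y_η)`. -/
theorem stmt13 (pos neg : Set (Set ℕ))
    (hdisj : (pos ∪ neg).Pairwise Disjoint) (hpn : Disjoint pos neg)
    (hinf : ∀ B ∈ pos ∪ neg, B.Infinite) :
    (∀ g ∈ SN, (g ∈ Subgroup.normalizer (Yyoung pos neg : Set (Equiv.Perm ℕ)) ↔
        ∀ B ∈ pos ∪ neg, g '' B = B)) ∧
    (∀ g ∈ SN, (g ∈ Subgroup.normalizer
        ((Subgroup.normalizer (Yyoung pos neg : Set (Equiv.Perm ℕ)) ⊓ SN : Subgroup (Equiv.Perm ℕ)) :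
          Set (Equiv.Perm ℕ)) ↔
        g ∈ Subgroup.normalizer (Yyoung pos neg : Set (Equiv.Perm ℕ)) ⊓ SN)) :=
  stmt13_general pos neg hdisj hinf
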